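/- Engulfing property of Monge–Ampère cubes and sections (Lemma 3.4): (1) For every x₀ ∈ ℝⁿ there exist constants C₀ > 0 and p₀ ≥ 1, depending only on n, such that for all 0 < r₁ < r₂ ≤ 1, all t > 0, and all x₁ ∈ Q_{r₁ t}(x₀), one has Q_{C₀ (r₂ − r₁)^{p₀} t}(x₁) ⊂ Q_{r₂ t}(x₀). (2) For every z₀ ∈ ℝ there exist constants C₁ > 0 and p₁ ≥ 1, depending only on s, such that for all 0 < r₁ < r₂ ≤ 1, all t > 0, and all z₁ ∈ S_{r₁ t}(z₀), one has S_{C₁ (r₂ − r₁)^{p₁} t}(z₁) ⊂ S_{r₂ t}(z₀). -/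

import Mathlib

open Set Filter Topology MeasureTheory
open scoped RealInnerProductSpace

noncomputable section

/-- ℝⁿ as Euclidean space. -/
abbrev Euc (n : ℕ) : Type := EuclideanSpace ℝ (Fin n)

/-- Points of ℝⁿ⁺¹ = ℝⁿ × ℝ. -/
abbrev Pt (n : ℕ) : Type := Euc n × ℝ

/-- `h(z) = s²/(1−s)·|z|^{1/s}`. -/
def hfun (s z : ℝ) : ℝ := s ^ 2 / (1 - s) * |z| ^ (1 / s)

/-- `h'(z) = s/(1−s)·z·|z|^{1/s−2}`. -/
def hder (s z : ℝ) : ℝ := s / (1 - s) * z * |z| ^ (1 / s - 2)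

/-- `h''(z) = |z|^{1/s−2}` (for `z ≠ 0`). -/
def hsec (s z : ℝ) : ℝ := |z| ^ (1 / s - 2)

/-- Monge–Ampère quasi-distance associated to `h`. -/
def deltaH (s z₀ z : ℝ) : ℝ := hfun s z - hfun s z₀ - hder s z₀ * (z - z₀)

/-- One-dimensional Monge–Ampère section of `h`. -/
def secH (s R z₀ : ℝ) : Set ℝ := {z | deltaH s z₀ z < R}

/-- `δ_φ(x₀,x) = |x−x₀|²/2`. -/
def deltaX {n : ℕ} (x₀ x : Euc n) : ℝ := ‖x - x₀‖ ^ 2 / 2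

/-- Section of `φ(x)=|x|²/2` : the euclidean ball of radius `√(2R)`. -/
def secX {n : ℕ} (R : ℝ) (x₀ : Euc n) : Set (Euc n) := {x | deltaX x₀ x < R}

/-- `δ_Φ = δ_φ + δ_h` on ℝⁿ⁺¹. -/
def deltaPhi {n : ℕ} (s : ℝ) (p q : Pt n) : ℝ := deltaX p.1 q.1 + deltaH s p.2 q.2

/-- Monge–Ampère section in ℝⁿ⁺¹. -/
def secPhi {n : ℕ} (s R : ℝ) (p : Pt n) : Set (Pt n) := {q | deltaPhi s p q < R}

/-- Monge–Ampère cube in ℝⁿ. -/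
def cubeX {n : ℕ} (R : ℝ) (x₀ : Euc n) : Set (Euc n) :=
  {x | ∀ i, |x i - x₀ i| < Real.sqrt (2 * R)}

/-- Monge–Ampère cube in ℝⁿ⁺¹. -/
def cubePhi {n : ℕ} (s R : ℝ) (p : Pt n) : Set (Pt n) := cubeX R p.1 ×ˢ secH s R p.2

/-- The measure `μ_h` on ℝ, with density `h''`. -/
def muH (s : ℝ) : Measure ℝ :=
  volume.withDensity fun z => ENNReal.ofReal (|z| ^ (1 / s - 2))

/-- The measure `μ_Φ` on ℝⁿ⁺¹, with density `h''(z)`. -/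
def muPhi (n : ℕ) (s : ℝ) : Measure (Pt n) :=
  (volume : Measure (Pt n)).withDensity fun p => ENNReal.ofReal (|p.2| ^ (1 / s - 2))

/-- Partial derivative `∂_z`. -/
def pZ {n : ℕ} (U : Pt n → ℝ) (p : Pt n) : ℝ := deriv (fun t => U (p.1, t)) p.2

/-- Partial derivative `∂_zz`. -/
def pZZ {n : ℕ} (U : Pt n → ℝ) (p : Pt n) : ℝ :=
  deriv (fun t => deriv (fun t' => U (p.1, t')) t) p.2

/-- `i`-th standard basis vector of ℝⁿ. -/
def basisVec {n : ℕ} (i : Fin n) : Euc n := EuclideanSpace.single i 1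

/-- Partial derivative `∂_i` in the `x` variables. -/
def pX {n : ℕ} (U : Pt n → ℝ) (p : Pt n) (i : Fin n) : ℝ :=
  fderiv ℝ (fun x => U (x, p.2)) p.1 (basisVec i)

/-- Second partial derivative `∂_{ij}` in the `x` variables. -/
def pXX {n : ℕ} (U : Pt n → ℝ) (p : Pt n) (i j : Fin n) : ℝ :=
  fderiv ℝ (fun x => pX U (x, p.2) j) p.1 (basisVec i)

/-- The extension operator `a^{ij}(x)∂_{ij}U + |z|^{2−1/s}∂_{zz}U`. -/
def AOp {n : ℕ} (s : ℝ) (a : Euc n → Fin n → Fin n → ℝ) (U : Pt n → ℝ) (p : Pt n) : ℝ :=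
  (∑ i, ∑ j, a p.1 i j * pXX U p i j) + |p.2| ^ (2 - 1 / s) * pZZ U p

/-- Identity coefficients (giving the Laplacian in `x`). -/
def idCoef (n : ℕ) : Euc n → Fin n → Fin n → ℝ := fun _ i j => if i = j then 1 else 0

/-- Symmetric, uniformly elliptic coefficients on `Ω`. -/
def IsElliptic {n : ℕ} (lam Lam : ℝ) (a : Euc n → Fin n → Fin n → ℝ) (Ω : Set (Euc n)) : Prop :=
  ∀ x ∈ Ω, (∀ i j, a x i j = a x j i) ∧
    ∀ ξ : Fin n → ℝ,
      lam * ∑ i, ξ i ^ 2 ≤ ∑ i, ∑ j, a x i j * ξ i * ξ j ∧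
      ∑ i, ∑ j, a x i j * ξ i * ξ j ≤ Lam * ∑ i, ξ i ^ 2

/-- `ψ` touches `U` from above at `p` within `D`. -/
def TouchAbove {n : ℕ} (ψ U : Pt n → ℝ) (D : Set (Pt n)) (p : Pt n) : Prop :=
  ψ p = U p ∧ ∃ E : Set (Pt n), IsOpen E ∧ Convex ℝ E ∧ p ∈ E ∧ ∀ q ∈ E ∩ D, U q ≤ ψ q

/-- `ψ` touches `U` from below at `p` within `D`. -/
def TouchBelow {n : ℕ} (ψ U : Pt n → ℝ) (D : Set (Pt n)) (p : Pt n) : Prop :=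
  ψ p = U p ∧ ∃ E : Set (Pt n), IsOpen E ∧ Convex ℝ E ∧ p ∈ E ∧ ∀ q ∈ E ∩ D, ψ q ≤ U q

/-- `f` admits a continuous extension to the closure of `D`. -/
def ExtCont {n : ℕ} (f : Pt n → ℝ) (D : Set (Pt n)) : Prop :=
  ∃ g : Pt n → ℝ, ContinuousOn g (closure D) ∧ EqOn f g D

/-- The test class `C_s` on an (open, upper) region `D`. -/
def MemCs {n : ℕ} (s : ℝ) (D : Set (Pt n)) (ψ : Pt n → ℝ) : Prop :=
  ContDiffOn ℝ 2 ψ D ∧ ExtCont ψ D ∧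
  (∀ i, ExtCont (fun p => pX ψ p i) D) ∧
  (∀ i j, ExtCont (fun p => pXX ψ p i j) D) ∧
  ExtCont (pZ ψ) D ∧
  ExtCont (fun p => |p.2| ^ (2 - 1 / s) * pZZ ψ p) D ∧
  ∀ p ∈ closure D, p.2 = 0 →
    ∃ L, HasDerivWithinAt (fun t => ψ (p.1, t)) L (Ici (0 : ℝ)) 0 ∧
      Tendsto (pZ ψ) (𝓝[D] p) (𝓝 L)

/-- `C_s`-viscosity subsolution of `a^{ij}∂_{ij}U + |z|^{2-1/s}∂_{zz}U = F` in `D`,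
`∂_z U = f` on the flat part `T ⊂ {z = 0}`. -/
def ViscSub {n : ℕ} (s : ℝ) (a : Euc n → Fin n → Fin n → ℝ) (F : Pt n → ℝ) (f : Euc n → ℝ)
    (D T : Set (Pt n)) (U : Pt n → ℝ) : Prop :=
  (∀ ψ : Pt n → ℝ, ContDiffOn ℝ 2 ψ D → ∀ p ∈ D, TouchAbove ψ U D p → F p ≤ AOp s a ψ p) ∧
  (∀ ψ : Pt n → ℝ, MemCs s (D ∩ {q : Pt n | 0 < q.2}) ψ → ∀ p ∈ T,
    TouchAbove ψ U ((D ∩ {q : Pt n | 0 < q.2}) ∪ T) p →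
    ∀ L, HasDerivWithinAt (fun t => ψ (p.1, t)) L (Ici (0 : ℝ)) 0 → f p.1 ≤ L)

/-- `C_s`-viscosity supersolution. -/
def ViscSuper {n : ℕ} (s : ℝ) (a : Euc n → Fin n → Fin n → ℝ) (F : Pt n → ℝ) (f : Euc n → ℝ)
    (D T : Set (Pt n)) (U : Pt n → ℝ) : Prop :=
  (∀ ψ : Pt n → ℝ, ContDiffOn ℝ 2 ψ D → ∀ p ∈ D, TouchBelow ψ U D p → AOp s a ψ p ≤ F p) ∧
  (∀ ψ : Pt n → ℝ, MemCs s (D ∩ {q : Pt n | 0 < q.2}) ψ → ∀ p ∈ T,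
    TouchBelow ψ U ((D ∩ {q : Pt n | 0 < q.2}) ∪ T) p →
    ∀ L, HasDerivWithinAt (fun t => ψ (p.1, t)) L (Ici (0 : ℝ)) 0 → L ≤ f p.1)

/-- `C_s`-viscosity solution. -/
def ViscSol {n : ℕ} (s : ℝ) (a : Euc n → Fin n → Fin n → ℝ) (F : Pt n → ℝ) (f : Euc n → ℝ)
    (D T : Set (Pt n)) (U : Pt n → ℝ) : Prop :=
  ViscSub s a F f D T U ∧ ViscSuper s a F f D T U

/-- `C_s`-viscosity solution of the reflected problem on a region `S` symmetric across `{z=0}`: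
the equation holds in `S ∩ {z ≠ 0}` and the Neumann condition on `S ∩ {z = 0}`. -/
def ViscSolRefl {n : ℕ} (s : ℝ) (a : Euc n → Fin n → Fin n → ℝ) (F : Pt n → ℝ) (f : Euc n → ℝ)
    (S : Set (Pt n)) (U : Pt n → ℝ) : Prop :=
  ViscSub s a F f (S ∩ {p : Pt n | p.2 ≠ 0}) (S ∩ {p : Pt n | p.2 = 0}) U ∧
  ViscSuper s a F f (S ∩ {p : Pt n | p.2 ≠ 0}) (S ∩ {p : Pt n | p.2 = 0}) U

/-- The upper half-cylinder `S_r(0) × (S_ρ(0))⁺ ⊂ ℝⁿ × ℝ`. -/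
def cylUp (n : ℕ) (s r ρ : ℝ) : Set (Pt n) := secX r (0 : Euc n) ×ˢ (secH s ρ 0 ∩ Ioi (0 : ℝ))

/-- The flat piece `T_r = S_r(0) × {0}`. -/
def Tflat (n : ℕ) (r : ℝ) : Set (Pt n) := secX r (0 : Euc n) ×ˢ ({0} : Set ℝ)

/-- Upper half of the unit section of `Φ` in ℝⁿ⁺¹. -/
def Dupper (n : ℕ) (s : ℝ) : Set (Pt n) :=
  secPhi s 1 ((0 : Euc n), (0 : ℝ)) ∩ {p : Pt n | 0 < p.2}

/-- Flat part of the unit section of `Φ`. -/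
def Tzero (n : ℕ) (s : ℝ) : Set (Pt n) :=
  secPhi s 1 ((0 : Euc n), (0 : ℝ)) ∩ {p : Pt n | p.2 = 0}

/-- Oscillation of `H` on `A`. -/
def oscOn {n : ℕ} (H : Pt n → ℝ) (A : Set (Pt n)) : ℝ := sSup (H '' A) - sInf (H '' A)

/-- Norm of the `k`-th derivative in the `x` variables. -/
def DxkNorm {n : ℕ} (k : ℕ) (H : Pt n → ℝ) (p : Pt n) : ℝ :=
  ‖iteratedFDeriv ℝ k (fun x => H (x, p.2)) p.1‖

/-- Classical solution of `Δ_x H + z^{2−1/s}∂_{zz}H = 0` in `D`, `∂_z H = 0` on `T`. -/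
def ClassicalHarm (n : ℕ) (s : ℝ) (D T : Set (Pt n)) (H : Pt n → ℝ) : Prop :=
  ContDiffOn ℝ 2 H D ∧ ContinuousOn H (D ∪ T) ∧
  (∀ p ∈ D, (∑ i, pXX H p i i) + |p.2| ^ (2 - 1 / s) * pZZ H p = 0) ∧
  (∀ p ∈ T, HasDerivWithinAt (fun t => H (p.1, t)) 0 (Ici (0 : ℝ)) 0)

/-- Contact set obtained by sliding Monge–Ampère paraboloids of opening `a` with vertices in
`B` from below until they touch the graph of `U` over `K`. -/
def contactSet {n : ℕ} (s a : ℝ) (U : Pt n → ℝ) (K B : Set (Pt n)) : Set (Pt n) :=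
  {p | p ∈ K ∧ ∃ v ∈ B, ∀ q ∈ K, U p + a * deltaPhi s v p ≤ U q + a * deltaPhi s v q}

open Real

/-!
For cubes, a cube of radius `R` is a product of intervals of half-width `√(2R)`, so engulfing
reduces to `√r₁ + (r₂ - r₁) / 2 ≤ √r₂`.

For the sections of `h`, the three-point identity
`δ(z₀, z) = δ(z₀, z₁) + δ(z₁, z) + (h'(z₁) - h'(z₀)) (z - z₁)`
reduces engulfing to bounding the cross term by `C ε^(1/q) t` whenever `δ(z₀, z₁) ≤ t` and
`δ(z₁, z) ≤ ε t`, where `q = max 2 (1/s)`. Both `δ(a, b)` and `|h'(b) - h'(a)| |b - a|` are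
comparable to `(b - a)² max(|a|, |b|)^(1/s - 2)`; comparing the weights `max(|z₀|, |z₁|)` and
`max(|z₁|, |z|)` bounds the cross term by `ε^(1/2) t`, `ε^s t` or `ε t`, according to the regime.
-/

lemma rpow_le_rpow_abs_mul_rpow {c m u : ℝ} (p : ℝ) (hc : 0 < c) (hu : 0 < u) (hum : u ≤ c * m)
    (hmu : m ≤ c * u) : u ^ p ≤ c ^ |p| * m ^ p := by
  have hm : 0 < m := pos_of_mul_pos_right (hu.trans_le hum) hc.le
  rcases le_total 0 p with hp | hp
  · rw [abs_of_nonneg hp, ← mul_rpow hc.le hm.le]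
    exact rpow_le_rpow hu.le hum hp
  · calc u ^ p ≤ (m / c) ^ p :=
          rpow_le_rpow_of_nonpos (by positivity) ((div_le_iff₀ hc).2 (by linarith)) hp
      _ = c ^ |p| * m ^ p := by
        rw [abs_of_nonpos hp, div_rpow hm.le hc.le, rpow_neg hc.le, div_eq_inv_mul]

lemma rpow_sub_rpow_bounds_of_half_le {p x y : ℝ} (hp : -1 < p) (hx : y / 2 ≤ x) (hxy : x ≤ y) :
    (p + 1) * (y - x) * y ^ p ≤ 2 ^ |p| * (y ^ (p + 1) - x ^ (p + 1)) ∧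
      y ^ (p + 1) - x ^ (p + 1) ≤ 2 ^ |p| * (p + 1) * (y - x) * y ^ p := by
  rcases hxy.eq_or_lt with rfl | hxy
  · simp
  have hx0 : 0 < x := by linarith
  obtain ⟨ξ, ⟨hxξ, hξy⟩, hξ⟩ := exists_hasDerivAt_eq_slope (fun u => u ^ (p + 1))
    (fun u => (p + 1) * u ^ p) hxy
    (continuousOn_id.rpow_const fun u hu => Or.inl (hx0.trans_le hu.1).ne')
    (fun u hu => by simpa using hasDerivAt_rpow_const (p := p + 1) (Or.inl (hx0.trans hu.1).ne'))
  have hmvt : y ^ (p + 1) - x ^ (p + 1) = (p + 1) * ξ ^ p * (y - x) := by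
    rw [hξ, div_mul_cancel₀ _ (sub_ne_zero.2 hxy.ne')]
  have h₁ := rpow_le_rpow_abs_mul_rpow p two_pos (by linarith : 0 < ξ) (m := y) (by linarith)
    (by linarith)
  have h₂ := rpow_le_rpow_abs_mul_rpow p two_pos (by linarith : 0 < y) (m := ξ) (by linarith)
    (by linarith)
  have hr : 0 ≤ (p + 1) * (y - x) := by nlinarith
  rw [hmvt]
  constructor <;> nlinarith

lemma rpow_sub_rpow_bounds {p x y : ℝ} (hp : -1 < p) (hx : 0 ≤ x) (hxy : x ≤ y) :
    (p + 1) * (y - x) * y ^ p ≤ 2 ^ (|p| + 1) * (y ^ (p + 1) - x ^ (p + 1)) ∧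
      y ^ (p + 1) - x ^ (p + 1) ≤ (2 ^ |p| * (p + 1) + 2) * (y - x) * y ^ p := by
  have hy : 0 ≤ y := hx.trans hxy
  have hyp : 0 ≤ y ^ p := rpow_nonneg hy p
  have hdyp : 0 ≤ (p + 1) * (y - x) * y ^ p := by
    have : 0 ≤ (p + 1) * (y - x) := by nlinarith
    positivity
  have h2 : (2 : ℝ) ^ (|p| + 1) = 2 ^ |p| * 2 := rpow_add_one two_ne_zero _
  have h2p : 1 ≤ (2 : ℝ) ^ |p| := one_le_rpow one_le_two (abs_nonneg p)
  have hmono : x ^ (p + 1) ≤ y ^ (p + 1) := rpow_le_rpow hx hxy (by linarith)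
  rcases le_total (y / 2) x with hnear | hfar
  · obtain ⟨hlow, hup⟩ := rpow_sub_rpow_bounds_of_half_le hp hnear hxy
    constructor <;> nlinarith
  · obtain ⟨hlow, -⟩ := rpow_sub_rpow_bounds_of_half_le hp (le_refl (y / 2)) (by linarith)
    have hhalf : x ^ (p + 1) ≤ (y / 2) ^ (p + 1) := rpow_le_rpow hx hfar (by linarith)
    have hyy : y ^ (p + 1) = y * y ^ p := by
      rcases hy.eq_or_lt with rfl | hy
      · rw [zero_rpow (by linarith), zero_mul]
      · rw [rpow_add_one hy.ne', mul_comm]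
    constructor
    · calc (p + 1) * (y - x) * y ^ p ≤ 2 * ((p + 1) * (y - y / 2) * y ^ p) := by
            have : 0 ≤ (p + 1) * x * y ^ p := by
              have : 0 ≤ (p + 1) * x := by nlinarith
              positivity
            nlinarith
        _ ≤ 2 ^ (|p| + 1) * (y ^ (p + 1) - x ^ (p + 1)) := by
            rw [h2]; nlinarith
    · calc y ^ (p + 1) - x ^ (p + 1) ≤ 2 * (y - x) * y ^ p := by
            nlinarith [rpow_nonneg hx (p + 1)]
        _ ≤ (2 ^ |p| * (p + 1) + 2) * (y - x) * y ^ p := by nlinarith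

def signedRpow (p x : ℝ) : ℝ := x * |x| ^ p

lemma signedRpow_neg (p x : ℝ) : signedRpow p (-x) = -signedRpow p x := by
  simp [signedRpow]

lemma signedRpow_of_nonneg {p x : ℝ} (hp : -1 < p) (hx : 0 ≤ x) : signedRpow p x = x ^ (p + 1) := by
  rcases hx.eq_or_lt with rfl | hx
  · simp [signedRpow, zero_rpow (by linarith : p + 1 ≠ 0)]
  · rw [signedRpow, abs_of_pos hx, rpow_add_one hx.ne', mul_comm]

lemma signedRpow_sub_bounds_of_nonneg {p x y : ℝ} (hp : -1 < p) (hx : 0 ≤ x) (hxy : x ≤ y) :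
    (p + 1) / 2 ^ (|p| + 1) * (y - x) * max |x| |y| ^ p ≤ signedRpow p y - signedRpow p x ∧
      signedRpow p y - signedRpow p x ≤ (2 ^ |p| * (p + 1) + 2) * (y - x) * max |x| |y| ^ p := by
  have hy := hx.trans hxy
  obtain ⟨hlow, hup⟩ := rpow_sub_rpow_bounds hp hx hxy
  rw [abs_of_nonneg hx, abs_of_nonneg hy, max_eq_right hxy, signedRpow_of_nonneg hp hx,
    signedRpow_of_nonneg hp hy]
  refine ⟨?_, hup⟩
  rw [div_mul_eq_mul_div, div_mul_eq_mul_div, div_le_iff₀ (by positivity)]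
  linarith

lemma signedRpow_sub_bounds_of_nonpos_of_nonneg {p x y : ℝ} (hp : -1 < p) (hx : x ≤ 0)
    (hy : 0 ≤ y) :
    1 / 2 * (y - x) * max |x| |y| ^ p ≤ signedRpow p y - signedRpow p x ∧
      signedRpow p y - signedRpow p x ≤ 2 * (y - x) * max |x| |y| ^ p := by
  set M := max |x| |y|
  have hMxy : M = -x ∨ M = y := by
    simp only [M, abs_of_nonpos hx, abs_of_nonneg hy]
    exact max_choice _ _
  have hMx : -x ≤ M := (neg_le_abs x).trans (le_max_left _ _)
  have hMy : y ≤ M := (le_abs_self y).trans (le_max_right _ _)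
  have hM0 : 0 ≤ M := hy.trans hMy
  have hMM : M * M ^ p = M ^ (p + 1) := by
    rw [← signedRpow_of_nonneg hp hM0, signedRpow, abs_of_nonneg hM0]
  have hfx : signedRpow p x = -(-x) ^ (p + 1) := by
    rw [← signedRpow_of_nonneg hp (neg_nonneg.2 hx), signedRpow_neg, neg_neg]
  rw [signedRpow_of_nonneg hp hy, hfx, sub_neg_eq_add]
  have hy' : y ^ (p + 1) ≤ M ^ (p + 1) := rpow_le_rpow hy hMy (by linarith)
  have hx' : (-x) ^ (p + 1) ≤ M ^ (p + 1) := rpow_le_rpow (by linarith) hMx (by linarith)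
  have hMsum : M ^ (p + 1) ≤ y ^ (p + 1) + (-x) ^ (p + 1) := by
    rcases hMxy with h | h <;> rw [h] <;>
      linarith [rpow_nonneg hy (p + 1), rpow_nonneg (neg_nonneg.2 hx) (p + 1)]
  have hMp : 0 ≤ M ^ p := rpow_nonneg hM0 p
  have hM : M ≤ y - x := by rcases hMxy with h | h <;> linarith
  constructor <;> nlinarith

lemma exists_signedRpow_sub_bounds_of_le {p : ℝ} (hp : -1 < p) : ∃ k > 0, ∃ C > 0, ∀ ⦃x y : ℝ⦄,
    x ≤ y → k * (y - x) * max |x| |y| ^ p ≤ signedRpow p y - signedRpow p x ∧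
      signedRpow p y - signedRpow p x ≤ C * (y - x) * max |x| |y| ^ p := by
  set k := min ((p + 1) / 2 ^ (|p| + 1)) (1 / 2)
  set C := 2 ^ |p| * (p + 1) + 2
  have hC : 2 ≤ C := by
    have : 0 ≤ 2 ^ |p| * (p + 1) := mul_nonneg (rpow_nonneg zero_le_two _) (by linarith)
    linarith
  refine ⟨k, lt_min (div_pos (by linarith) (by positivity)) (by norm_num), C, by linarith,
    fun x y hxy => ?_⟩
  have weaken : ∀ {a b : ℝ}, k ≤ a → b ≤ C →
      a * (y - x) * max |x| |y| ^ p ≤ signedRpow p y - signedRpow p x ∧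
        signedRpow p y - signedRpow p x ≤ b * (y - x) * max |x| |y| ^ p →
      k * (y - x) * max |x| |y| ^ p ≤ signedRpow p y - signedRpow p x ∧
        signedRpow p y - signedRpow p x ≤ C * (y - x) * max |x| |y| ^ p := by
    rintro a b ha hb ⟨hlow, hup⟩
    have h0 : 0 ≤ (y - x) * max |x| |y| ^ p :=
      mul_nonneg (sub_nonneg.2 hxy) (rpow_nonneg (le_max_of_le_left (abs_nonneg x)) p)
    constructor <;> nlinarith
  rcases le_total 0 x with hx | hx
  · exact weaken (min_le_left _ _) le_rfl (signedRpow_sub_bounds_of_nonneg hp hx hxy)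
  rcases le_total y 0 with hy | hy
  · have h := signedRpow_sub_bounds_of_nonneg hp (neg_nonneg.2 hy) (neg_le_neg hxy)
    rw [signedRpow_neg, signedRpow_neg, abs_neg, abs_neg, max_comm, neg_sub_neg,
      neg_sub_neg] at h
    exact weaken (min_le_left _ _) le_rfl h
  · exact weaken (min_le_right _ _) hC (signedRpow_sub_bounds_of_nonpos_of_nonneg hp hx hy)

lemma exists_signedRpow_sub_bounds {p : ℝ} (hp : -1 < p) : ∃ k > 0, ∃ C > 0, ∀ x y : ℝ,
    k * (y - x) ^ 2 * max |x| |y| ^ p ≤ (signedRpow p y - signedRpow p x) * (y - x) ∧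
      |signedRpow p y - signedRpow p x| ≤ C * |y - x| * max |x| |y| ^ p := by
  obtain ⟨k, hk, C, hC, h⟩ := exists_signedRpow_sub_bounds_of_le hp
  refine ⟨k, hk, C, hC, fun x y => ?_⟩
  have hM : 0 ≤ max |x| |y| ^ p := rpow_nonneg (le_max_of_le_left (abs_nonneg x)) p
  rcases le_total x y with hxy | hyx
  · obtain ⟨hlow, hup⟩ := h hxy
    have : 0 ≤ k * (y - x) * max |x| |y| ^ p := by
      have := sub_nonneg.2 hxy
      positivity
    rw [abs_of_nonneg (by linarith : 0 ≤ signedRpow p y - signedRpow p x),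
      abs_of_nonneg (sub_nonneg.2 hxy), sq]
    exact ⟨by nlinarith, hup⟩
  · obtain ⟨hlow, hup⟩ := h hyx
    rw [max_comm] at hlow hup
    have : 0 ≤ k * (x - y) * max |x| |y| ^ p := by
      have := sub_nonneg.2 hyx
      positivity
    rw [abs_of_nonpos (by linarith : signedRpow p y - signedRpow p x ≤ 0),
      abs_of_nonpos (sub_nonpos.2 hyx), sq]
    exact ⟨by nlinarith, by linarith⟩

lemma sq_rpow_half {m : ℝ} (hm : 0 ≤ m) (p : ℝ) : (m ^ (p / 2)) ^ 2 = m ^ p := by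
  rw [← rpow_natCast, ← rpow_mul hm]
  norm_num

lemma mul_rpow_mul_le_of_rpow_half_le {p d₀ d₁ m₀ m₁ c T ε : ℝ} (hd₀ : 0 ≤ d₀) (hd₁ : 0 ≤ d₁)
    (hm₀ : 0 ≤ m₀) (hm₁ : 0 ≤ m₁) (hc : 0 ≤ c) (hm : m₀ ^ (p / 2) ≤ c * m₁ ^ (p / 2))
    (h₀ : d₀ ^ 2 * m₀ ^ p ≤ T) (h₁ : d₁ ^ 2 * m₁ ^ p ≤ ε * T) :
    d₀ * m₀ ^ p * d₁ ≤ c * √ε * T := by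
  have hT : 0 ≤ T := le_trans (by positivity) h₀
  have hu₀ : d₀ * m₀ ^ (p / 2) ≤ √T :=
    (le_sqrt (by positivity) hT).2 (by rwa [mul_pow, sq_rpow_half hm₀])
  have hu₁ : d₁ * m₁ ^ (p / 2) ≤ √(ε * T) :=
    (le_sqrt (by positivity) (le_trans (by positivity) h₁)).2 (by rwa [mul_pow, sq_rpow_half hm₁])
  calc d₀ * m₀ ^ p * d₁ = (d₀ * m₀ ^ (p / 2)) * m₀ ^ (p / 2) * d₁ := by
        rw [← sq_rpow_half hm₀ p]; ring
    _ ≤ (d₀ * m₀ ^ (p / 2)) * (c * m₁ ^ (p / 2)) * d₁ := by gcongr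
    _ = c * ((d₀ * m₀ ^ (p / 2)) * (d₁ * m₁ ^ (p / 2))) := by ring
    _ ≤ c * (√T * √(ε * T)) := by gcongr
    _ = c * √ε * T := by
        rw [sqrt_mul' _ hT]
        linear_combination c * √ε * mul_self_sqrt hT

lemma rpow_add_two_le {p a d m Y : ℝ} (hd : 0 < d) (ha : 0 ≤ a) (hdm : d ^ p ≤ a * m ^ p)
    (h : d ^ 2 * m ^ p ≤ Y) : d ^ (p + 2) ≤ a * Y := by
  rw [rpow_add hd, rpow_two, mul_comm]
  calc d ^ 2 * d ^ p ≤ d ^ 2 * (a * m ^ p) := by gcongr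
    _ = a * (d ^ 2 * m ^ p) := by ring
    _ ≤ a * Y := by gcongr

lemma rpow_sub_one_mul_le {r a b A ε : ℝ} (hr : 1 ≤ r) (ha : 0 ≤ a) (hb : 0 ≤ b) (hε : 0 ≤ ε)
    (h₀ : a ^ r ≤ A) (h₁ : b ^ r ≤ ε * A) : a ^ (r - 1) * b ≤ ε ^ (1 / r) * A := by
  have hr0 : r ≠ 0 := by linarith
  have hA : 0 ≤ A := le_trans (rpow_nonneg ha r) h₀
  have e₀ : a ^ (r - 1) = (a ^ r) ^ ((r - 1) / r) := by
    rw [← rpow_mul ha]; congr 1; field_simp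
  have e₁ : b = (b ^ r) ^ (1 / r) := by
    rw [← rpow_mul hb, mul_one_div_cancel hr0, rpow_one]
  calc a ^ (r - 1) * b = (a ^ r) ^ ((r - 1) / r) * (b ^ r) ^ (1 / r) := by rw [← e₀, ← e₁]
    _ ≤ A ^ ((r - 1) / r) * (ε * A) ^ (1 / r) := by
        gcongr
    _ = ε ^ (1 / r) * A := by
        have e : (r - 1) / r + 1 / r = 1 := by field_simp; ring
        rw [mul_rpow hε hA, mul_left_comm, ← rpow_add' hA (by rw [e]; norm_num), e, rpow_one]

lemma mul_rpow_mul_le_of_nonneg {p d₀ d₁ m₀ m₁ T ε : ℝ} (hp : 0 ≤ p) (hd₀ : 0 < d₀) (hd₁ : 0 < d₁)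
    (hε : 0 ≤ ε) (hdm₀ : d₀ ≤ 2 * m₀) (hdm₁ : d₁ ≤ 2 * m₁) (hmd₀ : m₀ ≤ 3 / 2 * d₀)
    (h₀ : d₀ ^ 2 * m₀ ^ p ≤ T) (h₁ : d₁ ^ 2 * m₁ ^ p ≤ ε * T) :
    d₀ * m₀ ^ p * d₁ ≤ 3 ^ p * ε ^ (1 / (p + 2)) * T := by
  have pow_le : ∀ {d m : ℝ}, 0 < d → d ≤ 2 * m → d ^ p ≤ 2 ^ p * m ^ p := fun hd hdm => by
    rw [← mul_rpow zero_le_two (by linarith)]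
    exact rpow_le_rpow hd.le hdm hp
  have hA₀ := rpow_add_two_le hd₀ (by positivity) (pow_le hd₀ hdm₀) h₀
  have hA₁ := rpow_add_two_le hd₁ (by positivity) (pow_le hd₁ hdm₁) h₁
  rw [mul_left_comm] at hA₁
  have key := rpow_sub_one_mul_le (by linarith) hd₀.le hd₁.le hε hA₀ hA₁
  rw [show p + 2 - 1 = p + 1 by ring, rpow_add_one hd₀.ne'] at key
  have hm₀ : m₀ ^ p ≤ (3 / 2) ^ p * d₀ ^ p := by
    rw [← mul_rpow (by norm_num) hd₀.le]
    exact rpow_le_rpow (by linarith) hmd₀ hp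
  calc d₀ * m₀ ^ p * d₁ ≤ d₀ * ((3 / 2) ^ p * d₀ ^ p) * d₁ := by gcongr
    _ = (3 / 2) ^ p * (d₀ ^ p * d₀ * d₁) := by ring
    _ ≤ (3 / 2) ^ p * (ε ^ (1 / (p + 2)) * (2 ^ p * T)) := by gcongr
    _ = 3 ^ p * ε ^ (1 / (p + 2)) * T := by
        rw [show (3 : ℝ) ^ p = (3 / 2) ^ p * 2 ^ p by
          rw [← mul_rpow (by norm_num) zero_le_two]; norm_num]
        ring

lemma mul_rpow_mul_le_of_nonpos {p d₀ d₁ m₀ m₁ T ε : ℝ} (hp : p ≤ 0) (hp1 : -1 < p)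
    (hd₀ : 0 < d₀) (hd₁ : 0 < d₁) (hm₁ : 0 < m₁) (hdm₀ : d₀ ≤ 2 * m₀) (hmd₀ : m₀ ≤ d₁ / 2)
    (hmd₁ : m₁ ≤ 3 / 2 * d₁) (h₁ : d₁ ^ 2 * m₁ ^ p ≤ ε * T) :
    d₀ * m₀ ^ p * d₁ ≤ 3 ^ (-p) * ε * T := by
  have hm₀ : 0 < m₀ := by linarith
  have hA := rpow_add_two_le hd₁ (by positivity : (0 : ℝ) ≤ (2 / 3) ^ p) (m := m₁) (by
    rw [← mul_rpow (by norm_num) (by linarith)]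
    exact rpow_le_rpow_of_nonpos (by linarith) (by linarith) hp) h₁
  have hm₀p : m₀ * m₀ ^ p ≤ (d₁ / 2) ^ (p + 1) := by
    rw [mul_comm, ← rpow_add_one hm₀.ne']
    exact rpow_le_rpow hm₀.le hmd₀ (by linarith)
  calc d₀ * m₀ ^ p * d₁ ≤ 2 * m₀ * m₀ ^ p * d₁ := by gcongr
    _ = 2 * (m₀ * m₀ ^ p) * d₁ := by ring
    _ ≤ 2 * (d₁ / 2) ^ (p + 1) * d₁ := by gcongr
    _ = (2 ^ p)⁻¹ * d₁ ^ (p + 2) := by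
        rw [div_rpow hd₁.le zero_le_two, rpow_add_one two_ne_zero, rpow_add_one hd₁.ne',
          show p + 2 = p + 1 + 1 by ring, rpow_add_one hd₁.ne', rpow_add_one hd₁.ne']
        field_simp
    _ ≤ (2 ^ p)⁻¹ * ((2 / 3) ^ p * (ε * T)) := by gcongr
    _ = 3 ^ (-p) * ε * T := by
        rw [div_rpow zero_le_two (by norm_num), rpow_neg (by norm_num)]
        field_simp

lemma abs_sub_le_two_mul_max (a b : ℝ) : |b - a| ≤ 2 * max |a| |b| := by
  linarith [abs_sub b a, le_max_left |a| |b|, le_max_right |a| |b|]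

lemma max_abs_midpoint_le (a b : ℝ) : max |a| |(a + b) / 2| ≤ max |a| |b| := by
  refine max_le (le_max_left _ _) ?_
  rw [abs_div, abs_two, div_le_iff₀ two_pos]
  linarith [abs_add_le a b, le_max_left |a| |b|, le_max_right |a| |b|]

lemma max_abs_le_three_mul_max_abs_midpoint (a b : ℝ) :
    max |a| |b| ≤ 3 * max |a| |(a + b) / 2| := by
  have hb : |b| ≤ 2 * |(a + b) / 2| + |a| := by
    calc |b| = |2 * ((a + b) / 2) - a| := by ring_nf
      _ ≤ |2 * ((a + b) / 2)| + |a| := abs_sub _ _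
      _ = 2 * |(a + b) / 2| + |a| := by rw [abs_mul, abs_two]
  refine max_le ?_ ?_ <;>
    linarith [le_max_left |a| |(a + b) / 2|, le_max_right |a| |(a + b) / 2|, abs_nonneg a]

lemma max_abs_le_max_abs_add_abs_sub (a b c : ℝ) : max |a| |b| ≤ max |b| |c| + |b - a| := by
  refine max_le ?_ (by linarith [le_max_left |b| |c|, abs_nonneg (b - a)])
  linarith [abs_sub_abs_le_abs_sub a b, abs_sub_comm a b, le_max_left |b| |c|]

lemma abs_sub_mul_rpow_mul_abs_sub_le {p z₀ z₁ z T ε : ℝ} (hp : -1 < p) (hε0 : 0 < ε)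
    (hε1 : ε ≤ 1) (h₀ : (z₁ - z₀) ^ 2 * max |z₀| |z₁| ^ p ≤ T)
    (h₁ : (z - z₁) ^ 2 * max |z₁| |z| ^ p ≤ ε * T) :
    |z₁ - z₀| * max |z₀| |z₁| ^ p * |z - z₁| ≤ 3 ^ |p| * ε ^ (1 / max 2 (p + 2)) * T := by
  rw [← sq_abs] at h₀ h₁
  set d₀ := |z₁ - z₀|
  set d₁ := |z - z₁|
  set m₀ := max |z₀| |z₁|
  set m₁ := max |z₁| |z|
  have hdm₀ : d₀ ≤ 2 * m₀ := abs_sub_le_two_mul_max z₀ z₁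
  have hdm₁ : d₁ ≤ 2 * m₁ := abs_sub_le_two_mul_max z₁ z
  have hm₀ : m₀ ≤ m₁ + d₀ := max_abs_le_max_abs_add_abs_sub z₀ z₁ z
  have hm₁ : m₁ ≤ m₀ + d₁ := by
    have h := max_abs_le_max_abs_add_abs_sub z z₁ z₀
    rwa [max_comm |z| |z₁|, max_comm |z₁| |z₀|, abs_sub_comm] at h
  have hT : 0 ≤ T := le_trans (by positivity) h₀
  rcases (show 0 ≤ d₀ from abs_nonneg _).eq_or_lt with h | hd₀
  · rw [← h, zero_mul, zero_mul]; positivity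
  rcases (show 0 ≤ d₁ from abs_nonneg _).eq_or_lt with h | hd₁
  · rw [← h, mul_zero]; positivity
  have hm₀0 : 0 < m₀ := by linarith
  have hm₁0 : 0 < m₁ := by linarith
  have hq : 1 / max 2 (p + 2) ≤ 1 := by
    rw [div_le_one (by positivity)]; exact le_max_of_le_left one_le_two
  have hsqrt : √ε ≤ ε ^ (1 / max 2 (p + 2)) := by
    rw [sqrt_eq_rpow]
    exact rpow_le_rpow_of_exponent_ge hε0 hε1 (one_div_le_one_div_of_le two_pos (le_max_left _ _))
  have three_le : ∀ {a : ℝ}, a ≤ |p| → (3 : ℝ) ^ a ≤ 3 ^ |p| := fun h =>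
    rpow_le_rpow_of_exponent_le (by norm_num) h
  have conclude : ∀ {c e : ℝ}, d₀ * m₀ ^ p * d₁ ≤ c * e * T → 0 ≤ e → c ≤ 3 ^ |p| →
      e ≤ ε ^ (1 / max 2 (p + 2)) → d₀ * m₀ ^ p * d₁ ≤ 3 ^ |p| * ε ^ (1 / max 2 (p + 2)) * T :=
    fun h he hc he' => h.trans (by gcongr)
  rcases le_total 0 p with hp0 | hp0
  · by_cases hcomp : m₀ ≤ 3 * m₁
    · refine conclude (mul_rpow_mul_le_of_rpow_half_le hd₀.le hd₁.le hm₀0.le hm₁0.le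
        (rpow_nonneg zero_le_three (p / 2)) ?_ h₀ h₁) (sqrt_nonneg ε)
        (three_le (by rw [abs_of_nonneg hp0]; linarith : p / 2 ≤ |p|)) hsqrt
      rw [← mul_rpow zero_le_three hm₁0.le]
      exact rpow_le_rpow hm₀0.le hcomp (by linarith)
    · refine conclude (mul_rpow_mul_le_of_nonneg hp0 hd₀ hd₁ hε0.le hdm₀ hdm₁ (by linarith) h₀ h₁)
        (rpow_nonneg hε0.le _) (three_le (le_abs_self p)) ?_
      exact rpow_le_rpow_of_exponent_ge hε0 hε1
        (one_div_le_one_div_of_le (by linarith) (le_max_right _ _))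
  · by_cases hcomp : m₁ ≤ 3 * m₀
    · refine conclude (mul_rpow_mul_le_of_rpow_half_le hd₀.le hd₁.le hm₀0.le hm₁0.le
        (rpow_nonneg zero_le_three (-(p / 2))) ?_ h₀ h₁) (sqrt_nonneg ε)
        (three_le (by rw [abs_of_nonpos hp0]; linarith : -(p / 2) ≤ |p|)) hsqrt
      calc m₀ ^ (p / 2) ≤ (m₁ / 3) ^ (p / 2) :=
            rpow_le_rpow_of_nonpos (by positivity) (by linarith) (by linarith)
        _ = 3 ^ (-(p / 2)) * m₁ ^ (p / 2) := by
            rw [div_rpow hm₁0.le zero_le_three, rpow_neg zero_le_three, div_eq_inv_mul]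
    · refine conclude
        (mul_rpow_mul_le_of_nonpos hp0 hp hd₀ hd₁ hm₁0 hdm₀ (by linarith) (by linarith) h₁)
        hε0.le (three_le (neg_le_abs p)) ?_
      calc ε = ε ^ (1 : ℝ) := (rpow_one ε).symm
        _ ≤ ε ^ (1 / max 2 (p + 2)) := rpow_le_rpow_of_exponent_ge hε0 hε1 hq

section deltaH

variable {s : ℝ}

lemma hder_eq_signedRpow (s z : ℝ) : hder s z = s / (1 - s) * signedRpow (1 / s - 2) z := by
  rw [hder, signedRpow, mul_assoc]

lemma deltaH_three_point (s a b c : ℝ) :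
    deltaH s a b = deltaH s a c + deltaH s c b + (hder s c - hder s a) * (b - c) := by
  unfold deltaH
  ring

lemma neg_one_lt_inv_sub_two (hs0 : 0 < s) (hs1 : s < 1) : -1 < 1 / s - 2 := by
  rw [lt_sub_iff_add_lt, lt_div_iff₀ hs0]
  linarith

/-- Young's inequality `|a|^(1/s - 1) |b| ≤ (1 - s) |a|^(1/s) + s |b|^(1/s)` is the tangent-line
inequality for `h` at `a`. -/
lemma deltaH_nonneg (hs0 : 0 < s) (hs1 : s < 1) (a b : ℝ) : 0 ≤ deltaH s a b := by
  have h1s : 1 - s ≠ 0 := by linarith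
  have hp := neg_one_lt_inv_sub_two hs0 hs1
  have hconj : (1 / s).HolderConjugate (1 / (1 - s)) :=
    holderConjugate_iff.2 ⟨by rw [lt_div_iff₀ hs0]; linarith, by simp⟩
  have young := young_inequality_of_nonneg (abs_nonneg b) (rpow_nonneg (abs_nonneg a) (1 / s - 1))
    hconj
  rw [← rpow_mul (abs_nonneg a), div_div_eq_mul_div, div_one, div_div_eq_mul_div, div_one,
    show (1 / s - 1) * (1 / (1 - s)) = 1 / s by field_simp] at young
  have hpow : ∀ q : ℝ, 0 < q + 1 → |a| * |a| ^ q = |a| ^ (q + 1) := fun q hq => by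
    rw [rpow_add_one' (abs_nonneg a) hq.ne', mul_comm]
  have hcross : a * |a| ^ (1 / s - 2) * b ≤ |b| * |a| ^ (1 / s - 1) := by
    calc a * |a| ^ (1 / s - 2) * b ≤ |a * |a| ^ (1 / s - 2) * b| := le_abs_self _
      _ = |a| * |a| ^ (1 / s - 2) * |b| := by
          rw [abs_mul, abs_mul, abs_of_nonneg (rpow_nonneg (abs_nonneg a) _)]
      _ = |b| * |a| ^ (1 / s - 1) := by
          rw [hpow _ (by linarith), mul_comm]; ring_nf
  have hdiag : a * |a| ^ (1 / s - 2) * a = |a| ^ (1 / s) := by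
    rw [mul_right_comm, ← abs_mul_abs_self, mul_assoc, hpow _ (by linarith),
      hpow _ (by linarith)]
    ring_nf
  have hexpr : deltaH s a b =
      s / (1 - s) * (s * |b| ^ (1 / s) + (1 - s) * |a| ^ (1 / s) - a * |a| ^ (1 / s - 2) * b) := by
    rw [deltaH, hfun, hfun, hder, mul_sub, ← hdiag]
    field_simp
    ring
  rw [hexpr]
  exact mul_nonneg (div_nonneg hs0.le (by linarith)) (by linarith)

/-- Convexity gives `δ(a, b) ≥ (h'(c) - h'(a)) (b - c)`; take `c` the midpoint. -/
lemma exists_deltaH_ge (hs0 : 0 < s) (hs1 : s < 1) :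
    ∃ K > 0, ∀ a b : ℝ, K * (b - a) ^ 2 * max |a| |b| ^ (1 / s - 2) ≤ deltaH s a b := by
  set p := 1 / s - 2
  obtain ⟨k, hk, _, _, hf⟩ := exists_signedRpow_sub_bounds (neg_one_lt_inv_sub_two hs0 hs1)
  have hκ : 0 < s / (1 - s) := div_pos hs0 (by linarith)
  refine ⟨s / (1 - s) * k / (4 * 3 ^ |p|), by positivity, fun a b => ?_⟩
  rcases eq_or_ne a b with rfl | hab
  · simpa using deltaH_nonneg hs0 hs1 a a
  set c := (a + b) / 2
  have hM' : 0 < max |a| |c| := by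
    rcases eq_or_ne a 0 with rfl | ha
    · exact lt_max_of_lt_right (abs_pos.2 (by simpa [c] using hab.symm))
    · exact lt_max_of_lt_left (abs_pos.2 ha)
  have hM'M := max_abs_midpoint_le a b
  have hcomp : max |a| |b| ^ p ≤ 3 ^ |p| * max |a| |c| ^ p :=
    rpow_le_rpow_abs_mul_rpow p three_pos (hM'.trans_le hM'M)
      (max_abs_le_three_mul_max_abs_midpoint a b) (by linarith)
  have hsplit : (hder s c - hder s a) * (b - c) ≤ deltaH s a b := by
    rw [deltaH_three_point s a b c]
    linarith [deltaH_nonneg hs0 hs1 a c, deltaH_nonneg hs0 hs1 c b]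
  calc s / (1 - s) * k / (4 * 3 ^ |p|) * (b - a) ^ 2 * max |a| |b| ^ p
      ≤ s / (1 - s) * k / (4 * 3 ^ |p|) * (b - a) ^ 2 * (3 ^ |p| * max |a| |c| ^ p) := by
        gcongr
    _ = s / (1 - s) * (k * (c - a) ^ 2 * max |a| |c| ^ p) := by
        simp only [c]
        field_simp
        ring
    _ ≤ s / (1 - s) * ((signedRpow p c - signedRpow p a) * (c - a)) :=
        mul_le_mul_of_nonneg_left (hf a c).1 hκ.le
    _ = (hder s c - hder s a) * (b - c) := by
        rw [hder_eq_signedRpow, hder_eq_signedRpow]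
        simp only [c]
        ring
    _ ≤ deltaH s a b := hsplit

lemma exists_abs_hder_sub_le (hs0 : 0 < s) (hs1 : s < 1) :
    ∃ C > 0, ∀ a b : ℝ, |hder s b - hder s a| ≤ C * |b - a| * max |a| |b| ^ (1 / s - 2) := by
  obtain ⟨_, _, C, hC, hf⟩ := exists_signedRpow_sub_bounds (neg_one_lt_inv_sub_two hs0 hs1)
  have hκ : 0 < s / (1 - s) := div_pos hs0 (by linarith)
  refine ⟨s / (1 - s) * C, by positivity, fun a b => ?_⟩
  rw [hder_eq_signedRpow, hder_eq_signedRpow, ← mul_sub, abs_mul, abs_of_pos hκ, mul_assoc,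
    mul_assoc]
  exact mul_le_mul_of_nonneg_left (by simpa only [mul_assoc] using (hf a b).2) hκ.le

lemma exists_deltaH_le_add (hs0 : 0 < s) (hs1 : s < 1) :
    ∃ C ≥ 1, ∀ z₀ z₁ z t ε : ℝ, 0 < ε → ε ≤ 1 → deltaH s z₀ z₁ ≤ t → deltaH s z₁ z ≤ ε * t →
      deltaH s z₀ z ≤ deltaH s z₀ z₁ + C * ε ^ (1 / max 2 (1 / s)) * t := by
  obtain ⟨K, hK, hlow⟩ := exists_deltaH_ge hs0 hs1
  obtain ⟨A, hA, hup⟩ := exists_abs_hder_sub_le hs0 hs1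
  refine ⟨1 + A * 3 ^ |1 / s - 2| / K, le_add_of_nonneg_right (by positivity),
    fun z₀ z₁ z t ε hε0 hε1 h₀ h₁ => ?_⟩
  have ht : 0 ≤ t := (deltaH_nonneg hs0 hs1 z₀ z₁).trans h₀
  set e := ε ^ (1 / max 2 (1 / s))
  have hεe : ε ≤ e := by
    refine (rpow_one ε).symm.trans_le (rpow_le_rpow_of_exponent_ge hε0 hε1 ?_)
    rw [div_le_one (by positivity)]
    exact le_max_of_le_left one_le_two
  have hcross : |z₁ - z₀| * max |z₀| |z₁| ^ (1 / s - 2) * |z - z₁| ≤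
      3 ^ |1 / s - 2| * e * (t / K) := by
    have h := abs_sub_mul_rpow_mul_abs_sub_le (z₀ := z₀) (z₁ := z₁) (z := z) (T := t / K)
      (neg_one_lt_inv_sub_two hs0 hs1) hε0 hε1
      ((le_div_iff₀ hK).2 (by linarith [hlow z₀ z₁]))
      (by rw [← mul_div_assoc, le_div_iff₀ hK]; linarith [hlow z₁ z])
    rwa [sub_add_cancel] at h
  have hX : (hder s z₁ - hder s z₀) * (z - z₁) ≤
      A * (|z₁ - z₀| * max |z₀| |z₁| ^ (1 / s - 2) * |z - z₁|) :=
    calc (hder s z₁ - hder s z₀) * (z - z₁) ≤ |hder s z₁ - hder s z₀| * |z - z₁| := by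
          rw [← abs_mul]; exact le_abs_self _
      _ ≤ A * |z₁ - z₀| * max |z₀| |z₁| ^ (1 / s - 2) * |z - z₁| := by gcongr; exact hup z₀ z₁
      _ = A * (|z₁ - z₀| * max |z₀| |z₁| ^ (1 / s - 2) * |z - z₁|) := by ring
  calc deltaH s z₀ z = deltaH s z₀ z₁ + deltaH s z₁ z + (hder s z₁ - hder s z₀) * (z - z₁) :=
        deltaH_three_point s z₀ z z₁
    _ ≤ deltaH s z₀ z₁ + e * t + A * (|z₁ - z₀| * max |z₀| |z₁| ^ (1 / s - 2) * |z - z₁|) := by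
        linarith [h₁.trans (mul_le_mul_of_nonneg_right hεe ht)]
    _ ≤ deltaH s z₀ z₁ + e * t + A * (3 ^ |1 / s - 2| * e * (t / K)) := by gcongr
    _ = deltaH s z₀ z₁ + (1 + A * 3 ^ |1 / s - 2| / K) * e * t := by
        field_simp
        ring

end deltaH

lemma cubeX_subset_cubeX {n : ℕ} {x₀ x₁ : Euc n} {R ρ R' : ℝ} (hx₁ : x₁ ∈ cubeX R x₀)
    (h : √(2 * R) + √(2 * ρ) ≤ √(2 * R')) : cubeX ρ x₁ ⊆ cubeX R' x₀ := fun x hx i =>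
  calc |x i - x₀ i| ≤ |x i - x₁ i| + |x₁ i - x₀ i| := abs_sub_le _ _ _
    _ < √(2 * ρ) + √(2 * R) := add_lt_add (hx i) (hx₁ i)
    _ ≤ √(2 * R') := by linarith

lemma sqrt_two_mul_add_sqrt_two_mul_le {r₁ r₂ t : ℝ} (hr₁ : 0 ≤ r₁) (hr₁₂ : r₁ ≤ r₂)
    (hr₂ : r₂ ≤ 1) :
    √(2 * (r₁ * t)) + √(2 * (1 / 4 * (r₂ - r₁) ^ 2 * t)) ≤ √(2 * (r₂ * t)) := by
  have factor : ∀ r, 0 ≤ r → √(2 * (r * t)) = √r * √(2 * t) := fun r hr => by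
    rw [← sqrt_mul hr]; ring_nf
  have hquarter : √(2 * (1 / 4 * (r₂ - r₁) ^ 2 * t)) = (r₂ - r₁) / 2 * √(2 * t) := by
    rw [show 2 * (1 / 4 * (r₂ - r₁) ^ 2 * t) = ((r₂ - r₁) / 2) ^ 2 * (2 * t) by ring,
      sqrt_mul (sq_nonneg _), sqrt_sq (by linarith)]
  rw [factor r₁ hr₁, factor r₂ (hr₁.trans hr₁₂), hquarter, ← add_mul]
  refine mul_le_mul_of_nonneg_right ?_ (sqrt_nonneg _)
  have h₁ := sq_sqrt hr₁
  have h₂ := sq_sqrt (hr₁.trans hr₁₂)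
  have h₁₂ : √r₁ ≤ √r₂ := sqrt_le_sqrt hr₁₂
  have h₂1 : √r₂ ≤ 1 := sqrt_le_one.2 hr₂
  nlinarith [sqrt_nonneg r₁]

theorem engulfing_general (n : ℕ) (s : ℝ) (hs0 : 0 < s) (hs1 : s < 1) :
    (∃ C₀ p₀ : ℝ, 0 < C₀ ∧ 1 ≤ p₀ ∧
      ∀ x₀ : Euc n, ∀ r₁ r₂ t : ℝ, 0 < r₁ → r₁ < r₂ → r₂ ≤ 1 → 0 < t →
        ∀ x₁ ∈ cubeX (r₁ * t) x₀,
          cubeX (C₀ * (r₂ - r₁) ^ p₀ * t) x₁ ⊆ cubeX (r₂ * t) x₀) ∧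
    (∃ C₁ p₁ : ℝ, 0 < C₁ ∧ 1 ≤ p₁ ∧
      ∀ z₀ : ℝ, ∀ r₁ r₂ t : ℝ, 0 < r₁ → r₁ < r₂ → r₂ ≤ 1 → 0 < t →
        ∀ z₁ ∈ secH s (r₁ * t) z₀,
          secH s (C₁ * (r₂ - r₁) ^ p₁ * t) z₁ ⊆ secH s (r₂ * t) z₀) := by
  refine ⟨⟨1 / 4, 2, by norm_num, by norm_num,
    fun x₀ r₁ r₂ t hr₁ hr₁₂ hr₂ _ x₁ hx₁ => cubeX_subset_cubeX hx₁ ?_⟩, ?_⟩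
  · rw [rpow_two]
    exact sqrt_two_mul_add_sqrt_two_mul_le hr₁.le hr₁₂.le hr₂
  obtain ⟨C, hC, hδ⟩ := exists_deltaH_le_add hs0 hs1
  set q := max 2 (1 / s)
  have hq : 1 ≤ q := le_max_of_le_left one_le_two
  refine ⟨(C ^ q)⁻¹, q, inv_pos.2 (rpow_pos_of_pos (by linarith) q), hq,
    fun z₀ r₁ r₂ t hr₁ hr₁₂ hr₂ ht z₁ hz₁ z hz => ?_⟩
  have hr : 0 < (r₂ - r₁) / C := div_pos (by linarith) (by linarith)
  have hε : (C ^ q)⁻¹ * (r₂ - r₁) ^ q = ((r₂ - r₁) / C) ^ q := by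
    rw [div_rpow (by linarith) (by linarith), div_eq_inv_mul]
  have hεq : (((r₂ - r₁) / C) ^ q) ^ (1 / q) = (r₂ - r₁) / C := by
    rw [← rpow_mul hr.le, mul_one_div_cancel (by linarith), rpow_one]
  have key := hδ z₀ z₁ z t _ (rpow_pos_of_pos hr q)
    (rpow_le_one hr.le ((div_le_one (by linarith)).2 (by linarith)) (by linarith))
    (hz₁.le.trans (by nlinarith)) (by rw [← hε]; exact hz.le)
  rw [hεq, mul_div_cancel₀ _ (by linarith)] at key
  show deltaH s z₀ z < r₂ * t
  have hz₁' : deltaH s z₀ z₁ < r₁ * t := hz₁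
  nlinarith

/-- **Lemma 3.4: engulfing property of Monge–Ampère cubes and one-dimensional sections.** -/
theorem engulfing (n : ℕ) (hn : 1 ≤ n) (s : ℝ) (hs0 : 0 < s) (hs1 : s < 1) :
    (∃ C₀ p₀ : ℝ, 0 < C₀ ∧ 1 ≤ p₀ ∧
      ∀ x₀ : Euc n, ∀ r₁ r₂ t : ℝ, 0 < r₁ → r₁ < r₂ → r₂ ≤ 1 → 0 < t →
        ∀ x₁ ∈ cubeX (r₁ * t) x₀,
          cubeX (C₀ * (r₂ - r₁) ^ p₀ * t) x₁ ⊆ cubeX (r₂ * t) x₀) ∧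
    (∃ C₁ p₁ : ℝ, 0 < C₁ ∧ 1 ≤ p₁ ∧
      ∀ z₀ : ℝ, ∀ r₁ r₂ t : ℝ, 0 < r₁ → r₁ < r₂ → r₂ ≤ 1 → 0 < t →
        ∀ z₁ ∈ secH s (r₁ * t) z₀,
          secH s (C₁ * (r₂ - r₁) ^ p₁ * t) z₁ ⊆ secH s (r₂ * t) z₀) :=
  engulfing_general n s hs0 hs1
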